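/- For the tribonacci sequence f_0=0, f_1=1, f_2=3, f_3=6, f_n = f_{n-1}+f_{n-2}+f_{n-3} for n ≥ 4, and any w : ℕ → {-1,1} with w_1 = 1: F̂_n(w) = sum_{j=1}^n w_j f_j equals f_1 = 1 if and only if n = 1 or n = 4m+1 for some m ≥ 1 with the blocks (w_{4j+2},...,w_{4j+5}) equal to (+1,+1,+1,-1) or (-1,-1,-1,+1) for all 0 ≤ j < m. -/
import Mathlib


/-- The block `(w p, w (p+1), w (p+2), w (p+3))` equals `(+1,+1,+1,-1)` or
`(-1,-1,-1,+1)` (the condition `C(3,p)`). -/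
def TriBlockCond (p : ℕ) (w : ℕ → ℤ) : Prop :=
  (w p = 1 ∧ w (p + 1) = 1 ∧ w (p + 2) = 1 ∧ w (p + 3) = -1) ∨
  (w p = -1 ∧ w (p + 1) = -1 ∧ w (p + 2) = -1 ∧ w (p + 3) = 1)

namespace TriAux

lemma frec' {f : ℕ → ℕ}
    (hrec : ∀ n, 4 ≤ n → f n = f (n - 1) + f (n - 2) + f (n - 3)) (n : ℕ) :
    f (n + 4) = f (n + 3) + f (n + 2) + f (n + 1) := by
  have h := hrec (n + 4) (by omega)
  have e1 : n + 4 - 1 = n + 3 := by omega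
  have e2 : n + 4 - 2 = n + 2 := by omega
  have e3 : n + 4 - 3 = n + 1 := by omega
  rw [e1, e2, e3] at h
  exact h

lemma fmono {f : ℕ → ℕ} (h1 : f 1 = 1) (h2 : f 2 = 3) (h3 : f 3 = 6)
    (hrec : ∀ n, 4 ≤ n → f n = f (n - 1) + f (n - 2) + f (n - 3)) :
    ∀ n, 1 ≤ n → f n ≤ f (n + 1) := by
  intro n hn
  rcases n with _ | _ | _ | _ | k
  · omega
  · show f 1 ≤ f 2; omega
  · show f 2 ≤ f 3; omega
  · have e : f 4 = f 3 + f 2 + f 1 := frec' hrec 0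
    show f 3 ≤ f 4
    omega
  · have e : f (k + 5) = f (k + 4) + f (k + 3) + f (k + 2) := frec' hrec (k + 1)
    show f (k + 4) ≤ f (k + 5)
    omega

lemma fpar {f : ℕ → ℕ} (h0 : f 0 = 0) (h1 : f 1 = 1) (h2 : f 2 = 3) (h3 : f 3 = 6)
    (hrec : ∀ n, 4 ≤ n → f n = f (n - 1) + f (n - 2) + f (n - 3)) :
    ∀ n, f n % 2 = ((n + 1) % 4) / 2 := by
  intro n
  induction n using Nat.strong_induction_on with
  | _ n ih =>
    rcases n with _ | _ | _ | _ | k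
    · show f 0 % 2 = ((0 + 1) % 4) / 2; omega
    · show f 1 % 2 = ((1 + 1) % 4) / 2; omega
    · show f 2 % 2 = ((2 + 1) % 4) / 2; omega
    · show f 3 % 2 = ((3 + 1) % 4) / 2; omega
    · have e : f (k + 4) = f (k + 3) + f (k + 2) + f (k + 1) := frec' hrec k
      have i1 : f (k + 1) % 2 = ((k + 2) % 4) / 2 := ih (k + 1) (by omega)
      have i2 : f (k + 2) % 2 = ((k + 3) % 4) / 2 := ih (k + 2) (by omega)
      have i3 : f (k + 3) % 2 = ((k + 4) % 4) / 2 := ih (k + 3) (by omega)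
      show f (k + 4) % 2 = ((k + 5) % 4) / 2
      omega

lemma Tpar {f : ℕ → ℕ} (h0 : f 0 = 0) (h1 : f 1 = 1) (h2 : f 2 = 3) (h3 : f 3 = 6)
    (hrec : ∀ n, 4 ≤ n → f n = f (n - 1) + f (n - 2) + f (n - 3)) :
    ∀ n, ((∑ j ∈ Finset.Icc 1 n, f j) % 2 = 1 ↔ n % 4 = 1) := by
  intro n
  induction n with
  | zero => simp
  | succ n ih =>
    rw [Finset.sum_Icc_succ_top (by omega)]
    have hp : f (n + 1) % 2 = ((n + 2) % 4) / 2 := fpar h0 h1 h2 h3 hrec (n + 1)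
    omega

lemma three_le {f : ℕ → ℕ} (h1 : f 1 = 1) (h2 : f 2 = 3) (h3 : f 3 = 6)
    (hrec : ∀ n, 4 ≤ n → f n = f (n - 1) + f (n - 2) + f (n - 3)) :
    ∀ k, 1 ≤ k → 3 * f (k + 1) ≤ 2 * f (k + 2) := by
  intro k hk
  rcases k with _ | _ | _ | m
  · omega
  · have e : f 4 = f 3 + f 2 + f 1 := frec' hrec 0
    show 3 * f 2 ≤ 2 * f 3
    omega
  · have e : f 4 = f 3 + f 2 + f 1 := frec' hrec 0
    show 3 * f 3 ≤ 2 * f 4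
    omega
  · have e1 : f (m + 5) = f (m + 4) + f (m + 3) + f (m + 2) := frec' hrec (m + 1)
    have e2 : f (m + 4) = f (m + 3) + f (m + 2) + f (m + 1) := frec' hrec m
    have m1 : f (m + 1) ≤ f (m + 2) := fmono h1 h2 h3 hrec (m + 1) (by omega)
    have m2 : f (m + 2) ≤ f (m + 3) := fmono h1 h2 h3 hrec (m + 2) (by omega)
    show 3 * f (m + 4) ≤ 2 * f (m + 5)
    omega

lemma Tgrow {f : ℕ → ℕ} (h1 : f 1 = 1) (h2 : f 2 = 3) (h3 : f 3 = 6)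
    (hrec : ∀ n, 4 ≤ n → f n = f (n - 1) + f (n - 2) + f (n - 3)) :
    ∀ k, 1 ≤ k → (∑ j ∈ Finset.Icc 1 k, f j) + 2 ≤ 2 * f (k + 1) := by
  intro k hk
  induction k, hk using Nat.le_induction with
  | base =>
    rw [Finset.Icc_self, Finset.sum_singleton, h1, h2]
    norm_num
  | succ k hk ih =>
    rw [Finset.sum_Icc_succ_top (by omega)]
    have h3l : 3 * f (k + 1) ≤ 2 * f (k + 2) := three_le h1 h2 h3 hrec k hk
    show (∑ j ∈ Finset.Icc 1 k, f j) + f (k + 1) + 2 ≤ 2 * f (k + 2)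
    omega

lemma Fbound {f : ℕ → ℕ} {w : ℕ → ℤ} (hw : ∀ i, w i = 1 ∨ w i = -1) (n : ℕ) :
    |∑ j ∈ Finset.Icc 1 n, w j * (f j : ℤ)| ≤ ∑ j ∈ Finset.Icc 1 n, (f j : ℤ) := by
  refine (Finset.abs_sum_le_sum_abs _ _).trans ?_
  apply Finset.sum_le_sum
  intro j _
  rcases hw j with h | h <;>
    simp [h, abs_of_nonneg, Int.natCast_nonneg]

lemma Fpar {f : ℕ → ℕ} {w : ℕ → ℤ} (hw : ∀ i, w i = 1 ∨ w i = -1) (n : ℕ) :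
    (2 : ℤ) ∣ (∑ j ∈ Finset.Icc 1 n, (f j : ℤ)) - ∑ j ∈ Finset.Icc 1 n, w j * (f j : ℤ) := by
  rw [← Finset.sum_sub_distrib]
  apply Finset.dvd_sum
  intro j _
  rcases hw j with h | h
  · simp [h]
  · rw [h]; exact ⟨f j, by ring⟩

lemma split4 (g : ℕ → ℤ) (n : ℕ) :
    ∑ j ∈ Finset.Icc 1 (n + 4), g j =
      (∑ j ∈ Finset.Icc 1 n, g j) + g (n + 1) + g (n + 2) + g (n + 3) + g (n + 4) := by
  rw [show n + 4 = (n + 3) + 1 from rfl, Finset.sum_Icc_succ_top (by omega),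
    show n + 3 = (n + 2) + 1 from rfl, Finset.sum_Icc_succ_top (by omega),
    show n + 2 = (n + 1) + 1 from rfl, Finset.sum_Icc_succ_top (by omega),
    Finset.sum_Icc_succ_top (by omega)]

lemma mod_four {f : ℕ → ℕ} {w : ℕ → ℤ}
    (h0 : f 0 = 0) (h1 : f 1 = 1) (h2 : f 2 = 3) (h3 : f 3 = 6)
    (hrec : ∀ n, 4 ≤ n → f n = f (n - 1) + f (n - 2) + f (n - 3))
    (hw : ∀ i, w i = 1 ∨ w i = -1) (n : ℕ)
    (hF : ∑ j ∈ Finset.Icc 1 n, w j * (f j : ℤ) = 1) : n % 4 = 1 := by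
  have hp := Fpar (f := f) hw n
  rw [hF] at hp
  have hT := Tpar h0 h1 h2 h3 hrec n
  have hc : ((∑ j ∈ Finset.Icc 1 n, f j : ℕ) : ℤ) = ∑ j ∈ Finset.Icc 1 n, (f j : ℤ) := by
    push_cast; ring
  rw [← hc] at hp
  omega

lemma forward {f : ℕ → ℕ} {w : ℕ → ℤ}
    (h0 : f 0 = 0) (h1 : f 1 = 1) (h2 : f 2 = 3) (h3 : f 3 = 6)
    (hrec : ∀ n, 4 ≤ n → f n = f (n - 1) + f (n - 2) + f (n - 3))
    (hw : ∀ i, w i = 1 ∨ w i = -1) :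
    ∀ m, (∑ j ∈ Finset.Icc 1 (4 * m + 1), w j * (f j : ℤ)) = 1 →
      ∀ j, j < m → TriBlockCond (4 * j + 2) w := by
  intro m
  induction m with
  | zero => intro _ j hj; omega
  | succ m ih =>
    intro hF j hj
    have hs := split4 (fun j => w j * (f j : ℤ)) (4 * m + 1)
    rw [show 4 * (m + 1) + 1 = 4 * m + 1 + 4 by ring] at hF
    rw [hs] at hF
    simp only [show 4 * m + 1 + 1 = 4 * m + 2 by omega, show 4 * m + 1 + 2 = 4 * m + 3 by omega,
      show 4 * m + 1 + 3 = 4 * m + 4 by omega, show 4 * m + 1 + 4 = 4 * m + 5 by omega] at hF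
    have hrecN := frec' hrec (4 * m + 1)
    simp only [show 4 * m + 1 + 1 = 4 * m + 2 by omega, show 4 * m + 1 + 2 = 4 * m + 3 by omega,
      show 4 * m + 1 + 3 = 4 * m + 4 by omega, show 4 * m + 1 + 4 = 4 * m + 5 by omega] at hrecN
    have hrecZ : (f (4 * m + 5) : ℤ) = f (4 * m + 4) + f (4 * m + 3) + f (4 * m + 2) := by
      exact_mod_cast hrecN
    have hb := Fbound (f := f) hw (4 * m + 1)
    rw [abs_le] at hb
    obtain ⟨hb1, hb2⟩ := hb
    have hg := Tgrow h1 h2 h3 hrec (4 * m + 1) (by omega)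
    rw [show 4 * m + 1 + 1 = 4 * m + 2 by omega] at hg
    have hgZ : (∑ j ∈ Finset.Icc 1 (4 * m + 1), (f j : ℤ)) + 2 ≤ 2 * (f (4 * m + 2) : ℤ) := by
      exact_mod_cast hg
    have hm1 : (f (4 * m + 2) : ℤ) ≤ (f (4 * m + 3) : ℤ) := by
      have := fmono h1 h2 h3 hrec (4 * m + 2) (by omega)
      simp only [show 4 * m + 2 + 1 = 4 * m + 3 by omega] at this
      exact_mod_cast this
    have hm2 : (f (4 * m + 3) : ℤ) ≤ (f (4 * m + 4) : ℤ) := by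
      have := fmono h1 h2 h3 hrec (4 * m + 3) (by omega)
      simp only [show 4 * m + 3 + 1 = 4 * m + 4 by omega] at this
      exact_mod_cast this
    have key : (∑ j ∈ Finset.Icc 1 (4 * m + 1), w j * (f j : ℤ)) = 1 ∧
        TriBlockCond (4 * m + 2) w := by
      have g2 : 4 * m + 2 + 1 = 4 * m + 3 := by omega
      have g3 : 4 * m + 2 + 2 = 4 * m + 4 := by omega
      have g4 : 4 * m + 2 + 3 = 4 * m + 5 := by omega
      rcases hw (4 * m + 2) with a1 | a1 <;> rcases hw (4 * m + 3) with a2 | a2 <;>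
        rcases hw (4 * m + 4) with a3 | a3 <;> rcases hw (4 * m + 5) with a4 | a4 <;>
        rw [a1, a2, a3, a4] at hF <;>
        refine ⟨by linarith, ?_⟩ <;>
        unfold TriBlockCond <;>
        rw [g2, g3, g4] <;>
        first
          | exact Or.inl ⟨a1, a2, a3, a4⟩
          | exact Or.inr ⟨a1, a2, a3, a4⟩
          | (exfalso; linarith)
    rcases Nat.lt_succ_iff_lt_or_eq.mp hj with h | h
    · exact ih key.1 j h
    · subst h; exact key.2

lemma reverse {f : ℕ → ℕ} {w : ℕ → ℤ}
    (h1 : f 1 = 1)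
    (hrec : ∀ n, 4 ≤ n → f n = f (n - 1) + f (n - 2) + f (n - 3))
    (hw1 : w 1 = 1) :
    ∀ m, (∀ j, j < m → TriBlockCond (4 * j + 2) w) →
      ∑ j ∈ Finset.Icc 1 (4 * m + 1), w j * (f j : ℤ) = 1 := by
  intro m
  induction m with
  | zero => simp [hw1, h1]
  | succ m ih =>
    intro hbl
    have hF := ih (fun j hj => hbl j (by omega))
    have hs := split4 (fun j => w j * (f j : ℤ)) (4 * m + 1)
    rw [show 4 * (m + 1) + 1 = 4 * m + 1 + 4 by ring, hs]
    simp only [show 4 * m + 1 + 1 = 4 * m + 2 by omega, show 4 * m + 1 + 2 = 4 * m + 3 by omega,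
      show 4 * m + 1 + 3 = 4 * m + 4 by omega, show 4 * m + 1 + 4 = 4 * m + 5 by omega]
    have hrecN := frec' hrec (4 * m + 1)
    simp only [show 4 * m + 1 + 1 = 4 * m + 2 by omega, show 4 * m + 1 + 2 = 4 * m + 3 by omega,
      show 4 * m + 1 + 3 = 4 * m + 4 by omega, show 4 * m + 1 + 4 = 4 * m + 5 by omega] at hrecN
    have hrecZ : (f (4 * m + 5) : ℤ) = f (4 * m + 4) + f (4 * m + 3) + f (4 * m + 2) := by
      exact_mod_cast hrecN
    have hc := hbl m (by omega)
    unfold TriBlockCond at hc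
    simp only [show 4 * m + 2 + 1 = 4 * m + 3 by omega, show 4 * m + 2 + 2 = 4 * m + 4 by omega,
      show 4 * m + 2 + 3 = 4 * m + 5 by omega] at hc
    rcases hc with ⟨b1, b2, b3, b4⟩ | ⟨b1, b2, b3, b4⟩ <;>
      rw [b1, b2, b3, b4] <;> linarith

end TriAux

/-- For the tribonacci sequence `0, 1, 3, 6, ...` and `w : ℕ → {-1,1}` with `w 1 = 1`:
`F̂ n (w) = 1` iff `n = 1` or `n = 4m+1` for some `m ≥ 1` with
`(w_{4j+2},...,w_{4j+5}) ∈ {(+1,+1,+1,-1), (-1,-1,-1,+1)}` for all `0 ≤ j < m`. -/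
theorem tribonacci_walk_eq_one_iff (f : ℕ → ℕ)
    (h0 : f 0 = 0) (h1 : f 1 = 1) (h2 : f 2 = 3) (h3 : f 3 = 6)
    (hrec : ∀ n, 4 ≤ n → f n = f (n - 1) + f (n - 2) + f (n - 3))
    (w : ℕ → ℤ) (hw : ∀ i, w i = 1 ∨ w i = -1) (hw1 : w 1 = 1)
    (n : ℕ) (hn : 1 ≤ n) :
    (∑ j ∈ Finset.Icc 1 n, w j * (f j : ℤ) = 1) ↔
      (n = 1 ∨ ∃ m : ℕ, 1 ≤ m ∧ n = 4 * m + 1 ∧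
        ∀ j, j < m → TriBlockCond (4 * j + 2) w) := by
  constructor
  · intro hF
    have hmod := TriAux.mod_four h0 h1 h2 h3 hrec hw n hF
    obtain ⟨m, rfl⟩ : ∃ m, n = 4 * m + 1 := ⟨n / 4, by omega⟩
    rcases Nat.eq_zero_or_pos m with rfl | hm
    · left; norm_num
    · right; exact ⟨m, hm, rfl, TriAux.forward h0 h1 h2 h3 hrec hw m hF⟩
  · rintro (rfl | ⟨m, hm, rfl, hbl⟩)
    · simp [hw1, h1]
    · exact TriAux.reverse h1 hrec hw1 m hbl
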